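/- For every STL formula Φ over S, every trace π : ℕ → S, every time t : ℕ, and every formula ξ ∈ N(Φ): if (π,t) ⊨ ξ then (π,t) ⊨ Φ. That is, each member of N(Φ) describes a way in which Φ might be satisfied. -/

import Mathlib

/-- STL formulas over a type `S` of scenes. -/
inductive STL (S : Type) : Type 1 where
  | atom : (S → Prop) → STL S
  | neg : STL S → STL S
  | conj : STL S → STL S → STL S
  | disj : STL S → STL S → STL S
  | untl : ℕ → ℕ → STL S → STL S → STL S
  | always : ℕ → ℕ → STL S → STL S
  | eventually : ℕ → ℕ → STL S → STL S
  | next : STL S → STL S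

/-- Satisfaction `(π, t) ⊨ φ`. -/
def STL.Sat {S : Type} (π : ℕ → S) : ℕ → STL S → Prop
  | t, .atom p => p (π t)
  | t, .neg φ => ¬ STL.Sat π t φ
  | t, .conj φ ψ => STL.Sat π t φ ∧ STL.Sat π t ψ
  | t, .disj φ ψ => STL.Sat π t φ ∨ STL.Sat π t ψ
  | t, .untl a b φ ψ =>
      ∃ t', t + a ≤ t' ∧ t' ≤ t + b ∧ STL.Sat π t' ψ ∧
        ∀ t'', t ≤ t'' → t'' ≤ t' → STL.Sat π t'' φ
  | t, .always a b φ => ∀ t', t + a ≤ t' → t' ≤ t + b → STL.Sat π t' φ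
  | t, .eventually a b φ => ∃ t', t + a ≤ t' ∧ t' ≤ t + b ∧ STL.Sat π t' φ
  | t, .next φ => STL.Sat π (t + 1) φ

mutual
/-- `Theta Φ`: the set of formulas describing different ways of violating `Φ`.
(In the until case, `Θ(¬φ₁ ∨ φ₂)` and `Θ(φ₁ ∨ φ₂)` are unfolded via the
defining equations `Θ(¬φ₁ ∨ φ₂) = {x ∧ y : x ∈ N(φ₁), y ∈ Θ(φ₂)}` and
`Θ(φ₁ ∨ φ₂) = {x ∧ y : x ∈ Θ(φ₁), y ∈ Θ(φ₂)}`.) -/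
def STL.Theta {S : Type} : STL S → Set (STL S)
  | .atom p => {STL.neg (STL.atom p)}
  | .conj φ ψ => STL.Theta φ ∪ STL.Theta ψ
  | .disj φ ψ => {ξ | ∃ x ∈ STL.Theta φ, ∃ y ∈ STL.Theta ψ, ξ = STL.conj x y}
  | .neg φ => STL.NSat φ
  | .untl a b φ ψ =>
      {ξ | ∃ x ∈ {ζ | ∃ u ∈ STL.NSat φ, ∃ v ∈ STL.Theta ψ, ζ = STL.conj u v},
           ∃ y ∈ {ζ | ∃ u ∈ STL.Theta φ, ∃ v ∈ STL.Theta ψ, ζ = STL.conj u v},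
           ξ = STL.untl a b x y}
      ∪ {ξ | ∃ x ∈ STL.Theta φ, ∃ y ∈ STL.Theta ψ, ξ = STL.conj x y}
  | .always a b φ => {ξ | ∃ x ∈ STL.Theta φ, ξ = STL.eventually a b x}
  | .eventually a b φ => {ξ | ∃ x ∈ STL.Theta φ, ξ = STL.always a b x}
  | .next φ => {ξ | ∃ x ∈ STL.Theta φ, ξ = STL.next x}

/-- `NSat Φ` (written `N(Φ)` in the paper): the set of formulas describing
different ways of satisfying `Φ`. -/
def STL.NSat {S : Type} : STL S → Set (STL S)
  | .atom p => {STL.atom p}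
  | .conj φ ψ => {ξ | ∃ x ∈ STL.NSat φ, ∃ y ∈ STL.NSat ψ, ξ = STL.conj x y}
  | .disj φ ψ => STL.NSat φ ∪ STL.NSat ψ
  | .neg φ => STL.Theta φ
  | .untl a b φ ψ => {ξ | ∃ x ∈ STL.NSat φ, ∃ y ∈ STL.NSat ψ, ξ = STL.untl a b x y}
  | .always a b φ => {ξ | ∃ x ∈ STL.NSat φ, ξ = STL.always a b x}
  | .eventually a b φ => {ξ | ∃ x ∈ STL.NSat φ, ξ = STL.eventually a b x}
  | .next φ => {ξ | ∃ x ∈ STL.NSat φ, ξ = STL.next x}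
end


/-!
Soundness of `N` is proved simultaneously with the dual fact that no member of `Θ(Φ)` holds
where `Φ` does, by structural induction on `Φ`: negation swaps the two statements, and every
other connective transports them pointwise through its semantics. The only case needing an
argument is `Θ(φ₁ U[a,b] φ₂)`.
-/

namespace STL

variable {S : Type} {π : ℕ → S}

theorem not_sat_untl_of_mem_theta {a b t : ℕ} {φ ψ ξ : STL S}
    (hφN : ∀ t, ∀ x ∈ NSat φ, Sat π t x → Sat π t φ)
    (hφΘ : ∀ t, ∀ x ∈ Theta φ, Sat π t x → ¬ Sat π t φ)
    (hξ : ξ ∈ Theta (untl a b φ ψ)) (hsat : Sat π t ξ) : ¬ Sat π t (untl a b φ ψ) := by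
  rcases hξ with
    ⟨_, ⟨u, hu, _, _, rfl⟩, _, ⟨u', hu', _, _, rfl⟩, rfl⟩ | ⟨x, hx, _, _, rfl⟩
  · -- `(u ∧ _) U (u' ∧ _)` is unsatisfiable: at its witness time both `u ∈ N(φ)`
    -- and `u' ∈ Θ(φ)` hold.
    obtain ⟨s, has, _, ⟨hu's, _⟩, hall⟩ := hsat
    obtain ⟨hus, _⟩ := hall s (le_of_add_le_left has) le_rfl
    exact fun _ => hφΘ s u' hu' hu's (hφN s u hu hus)
  · -- the until forces `φ` already at time `t`, which `x ∈ Θ(φ)` excludes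
    rintro ⟨s, has, _, _, hall⟩
    exact hφΘ t x hx hsat.1 (hall t le_rfl (le_of_add_le_left has))

theorem theta_nsat_sound (Φ : STL S) :
    (∀ t, ∀ ξ ∈ Theta Φ, Sat π t ξ → ¬ Sat π t Φ) ∧
    (∀ t, ∀ ξ ∈ NSat Φ, Sat π t ξ → Sat π t Φ) := by
  induction Φ with
  | atom p =>
    refine ⟨?_, ?_⟩ <;> rintro t ξ rfl hs <;> exact hs
  | neg φ ih => exact ⟨fun t ξ hξ hs hφ => hφ (ih.2 t ξ hξ hs), ih.1⟩
  | conj φ ψ ihφ ihψ =>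
    refine ⟨?_, ?_⟩
    · rintro t ξ (hξ | hξ) hs ⟨hφ, hψ⟩
      exacts [ihφ.1 t ξ hξ hs hφ, ihψ.1 t ξ hξ hs hψ]
    · rintro t _ ⟨x, hx, y, hy, rfl⟩ ⟨hxs, hys⟩
      exact ⟨ihφ.2 t x hx hxs, ihψ.2 t y hy hys⟩
  | disj φ ψ ihφ ihψ =>
    refine ⟨?_, ?_⟩
    · rintro t _ ⟨x, hx, y, hy, rfl⟩ ⟨hxs, hys⟩ (hφ | hψ)
      exacts [ihφ.1 t x hx hxs hφ, ihψ.1 t y hy hys hψ]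
    · rintro t ξ (hξ | hξ) hs
      exacts [Or.inl (ihφ.2 t ξ hξ hs), Or.inr (ihψ.2 t ξ hξ hs)]
  | untl a b φ ψ ihφ ihψ =>
    refine ⟨fun t ξ hξ hs => not_sat_untl_of_mem_theta ihφ.2 ihφ.1 hξ hs, ?_⟩
    rintro t _ ⟨x, hx, y, hy, rfl⟩ ⟨s, has, hsb, hys, hall⟩
    exact ⟨s, has, hsb, ihψ.2 s y hy hys, fun r htr hrs => ihφ.2 r x hx (hall r htr hrs)⟩
  | always a b φ ih =>
    refine ⟨?_, ?_⟩
    · rintro t _ ⟨x, hx, rfl⟩ ⟨s, has, hsb, hxs⟩ hall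
      exact ih.1 s x hx hxs (hall s has hsb)
    · rintro t _ ⟨x, hx, rfl⟩ hall s has hsb
      exact ih.2 s x hx (hall s has hsb)
  | eventually a b φ ih =>
    refine ⟨?_, ?_⟩
    · rintro t _ ⟨x, hx, rfl⟩ hall ⟨s, has, hsb, hφs⟩
      exact ih.1 s x hx (hall s has hsb) hφs
    · rintro t _ ⟨x, hx, rfl⟩ ⟨s, has, hsb, hxs⟩
      exact ⟨s, has, hsb, ih.2 s x hx hxs⟩
  | next φ ih =>
    refine ⟨?_, ?_⟩
    · rintro t _ ⟨x, hx, rfl⟩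
      exact ih.1 (t + 1) x hx
    · rintro t _ ⟨x, hx, rfl⟩
      exact ih.2 (t + 1) x hx

end STL

/-- Every trace (at any time) satisfying a member of `N(Φ)` satisfies `Φ`. -/
theorem nsat_sound {S : Type} (Φ : STL S) (π : ℕ → S) (t : ℕ) (ξ : STL S)
    (hξ : ξ ∈ STL.NSat Φ) (hsat : STL.Sat π t ξ) : STL.Sat π t Φ :=
  (STL.theta_nsat_sound Φ).2 t ξ hξ hsat
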